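/- arXiv:1502.02987 — 4 statements merged into one kernel-verified Lean document; each statement's English description precedes it below -/
import Mathlib

section
/- Let X and Y be nonempty finite sets and let Γ : X × Y → {0,1} be a bipartite graph such that every x ∈ X has at least one y ∈ Y with Γ(x,y) = 1. Then the infimum of the Shannon capacities C(N), taken over all channels N on X × Y that are supported on Γ, equals log α*(Γ) (natural logarithm), and this infimum is attained by some channel N supported on Γ. -/
open Classical in
/-- Mutual information I(p;N) with natural logarithm. -/
noncomputable def mutInfo {X Y : Type*} [Fintype X] [Fintype Y]
    (p : X → ℝ) (N : X → Y → ℝ) : ℝ :=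
  ∑ x, ∑ y, if 0 < p x * N x y then
    p x * N x y * Real.log (N x y / ∑ x', p x' * N x' y) else 0

/-- p is a probability distribution on X. -/
def IsDist {X : Type*} [Fintype X] (p : X → ℝ) : Prop :=
  (∀ x, 0 ≤ p x) ∧ ∑ x, p x = 1

/-- N is a channel from X to Y. -/
def IsChannel {X Y : Type*} [Fintype X] [Fintype Y] (N : X → Y → ℝ) : Prop :=
  (∀ x y, 0 ≤ N x y) ∧ ∀ x, ∑ y, N x y = 1

/-- N is supported on the bipartite graph Γ. -/
def SupportedOn {X Y : Type*} (Γ : X → Y → ℝ) (N : X → Y → ℝ) : Prop :=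
  ∀ x y, 0 < N x y → Γ x y = 1

/-- Shannon capacity of a channel. -/
noncomputable def capacity {X Y : Type*} [Fintype X] [Fintype Y]
    (N : X → Y → ℝ) : ℝ :=
  sSup { c | ∃ p, IsDist p ∧ c = mutInfo p N }

/-- Fractional packing number of a bipartite graph Γ. -/
noncomputable def fracPack {X Y : Type*} [Fintype X] [Fintype Y]
    (Γ : X → Y → ℝ) : ℝ :=
  sSup { s | ∃ w : X → ℝ, (∀ x, 0 ≤ w x) ∧ (∀ y, ∑ x, w x * Γ x y ≤ 1) ∧
    s = ∑ x, w x }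

/-! The upper bound comes from a fractional cover `v`: for the channel `N x y ∝ Γ x y * v y`,
every row has relative entropy at most `log ∑ v` from the fixed output law `v / ∑ v`, and the
mutual information of any input is bounded by the average of these relative entropies.

The lower bound comes from a fractional packing `w` and a capacity-achieving input `p` with
output `q`. Averaging with the weights `w` finds an input `x₀` whose neighbourhood has `q`-mass at
most `1 / ∑ w`. Shifting a little mass of `p` onto `x₀` cannot raise the mutual information, and
since `N x₀` lives on that neighbourhood this forces `C(N) ≥ log ∑ w`.

The minimax theorem for the matrix game `Γ` supplies a packing and a cover with equal sums, and
weak duality identifies this common sum with `α*(Γ)`. -/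

open Finset Real

section RelativeEntropy

variable {Y : Type*} [Fintype Y]

/-- Meaningful for `a ≥ 0` and `b > 0` on the support of `a`; the convention `0 log 0 = 0`
comes for free from `0 * _ = 0`. -/
noncomputable def relEntropy (a b : Y → ℝ) : ℝ :=
  ∑ y, a y * log (a y / b y)

lemma IsDist.sum_filter_pos {a : Y → ℝ} (ha : IsDist a) : ∑ y with 0 < a y, a y = 1 := by
  rw [sum_filter_of_ne fun y _ h => lt_of_le_of_ne (ha.1 y) (Ne.symm h), ha.2]

lemma relEntropy_eq_sub {a b : Y → ℝ} (ha : ∀ y, 0 ≤ a y) (hab : ∀ y, 0 < a y → 0 < b y) :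
    relEntropy a b = ∑ y, a y * log (a y) - ∑ y, a y * log (b y) := by
  rw [relEntropy, ← sum_sub_distrib]
  refine sum_congr rfl fun y _ => ?_
  rcases (ha y).eq_or_lt with h | h
  · simp [← h]
  · rw [log_div h.ne' (hab y h).ne', mul_sub]

/-- Jensen's inequality for `log`, applied on the support of `a`. -/
lemma neg_log_sum_le_relEntropy {a b : Y → ℝ} (ha : IsDist a) (hab : ∀ y, 0 < a y → 0 < b y) :
    -log (∑ y with 0 < a y, b y) ≤ relEntropy a b := by
  have hsupp : ∀ y, y ∉ ({y | 0 < a y} : Finset Y) → a y = 0 := fun y hy =>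
    le_antisymm (not_lt.1 (by simpa using hy)) (ha.1 y)
  have jensen := strictConcaveOn_log_Ioi.concaveOn.le_map_sum (t := {y | 0 < a y})
    (w := a) (p := fun y => b y / a y) (fun y _ => ha.1 y) ha.sum_filter_pos
    (fun y hy => div_pos (hab y (by simpa using hy)) (by simpa using hy))
  have hcancel : ∑ y with 0 < a y, a y • (b y / a y) = ∑ y with 0 < a y, b y :=
    sum_congr rfl fun y hy => by
      rw [smul_eq_mul, mul_div_cancel₀ _ (by simpa using hy : 0 < a y).ne']
  rw [hcancel] at jensen
  rw [relEntropy, ← sum_subset (subset_univ _) fun y _ hy => by simp [hsupp y hy]]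
  calc -log (∑ y with 0 < a y, b y)
      ≤ -∑ y with 0 < a y, a y • log (b y / a y) := neg_le_neg jensen
    _ = ∑ y with 0 < a y, a y * log (a y / b y) := by
      rw [← sum_neg_distrib]
      refine sum_congr rfl fun y _ => ?_
      rw [smul_eq_mul, ← mul_neg, ← log_inv, inv_div]

lemma relEntropy_nonneg {a b : Y → ℝ} (ha : IsDist a) (hb : IsDist b)
    (hab : ∀ y, 0 < a y → 0 < b y) : 0 ≤ relEntropy a b := by
  obtain ⟨y₀, hy₀⟩ : ∃ y, 0 < a y := by
    by_contra! h
    simpa [sum_eq_zero fun y _ => le_antisymm (h y) (ha.1 y)] using ha.2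
  have hpos : 0 < ∑ y with 0 < a y, b y :=
    sum_pos' (fun y _ => hb.1 y) ⟨y₀, by simpa using hy₀, hab y₀ hy₀⟩
  have hle : ∑ y with 0 < a y, b y ≤ 1 :=
    hb.2 ▸ sum_le_sum_of_subset_of_nonneg (subset_univ _) fun y _ _ => hb.1 y
  linarith [neg_log_sum_le_relEntropy ha hab, log_nonpos hpos.le hle]

lemma relEntropy_le_log {a b : Y → ℝ} {K : ℝ} (ha : IsDist a) (hab : ∀ y, 0 < a y → 0 < b y)
    (hK : ∀ y, 0 < a y → a y / b y ≤ K) : relEntropy a b ≤ log K := by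
  calc relEntropy a b ≤ ∑ y, a y * log K := by
        refine sum_le_sum fun y _ => ?_
        rcases (ha.1 y).eq_or_lt with h | h
        · simp [← h]
        · exact mul_le_mul_of_nonneg_left
            (log_le_log (div_pos h (hab y h)) (hK y h)) h.le
    _ = log K := by rw [← sum_mul, ha.2, one_mul]

end RelativeEntropy

def outputDist {X Y : Type*} [Fintype X] (p : X → ℝ) (N : X → Y → ℝ) (y : Y) : ℝ :=
  ∑ x, p x * N x y

lemma mul_le_outputDist {X Y : Type*} [Fintype X] {p : X → ℝ} {N : X → Y → ℝ}
    (hp : ∀ x, 0 ≤ p x) (hN : ∀ x y, 0 ≤ N x y) (x : X) (y : Y) :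
    p x * N x y ≤ outputDist p N y :=
  single_le_sum (f := fun x => p x * N x y) (fun x _ => mul_nonneg (hp x) (hN x y)) (mem_univ x)

section MutualInformation

variable {X Y : Type*} [Fintype X] [Fintype Y]

lemma isDist_outputDist {p : X → ℝ} {N : X → Y → ℝ} (hp : IsDist p) (hN : IsChannel N) :
    IsDist (outputDist p N) := by
  refine ⟨fun y => sum_nonneg fun x _ => mul_nonneg (hp.1 x) (hN.1 x y), ?_⟩
  rw [← hp.2]
  unfold outputDist
  rw [sum_comm]
  simp [← mul_sum, hN.2]

lemma sum_mul_relEntropy_eq {p : X → ℝ} {N : X → Y → ℝ} {r : Y → ℝ} (hp : ∀ x, 0 ≤ p x)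
    (hN : ∀ x y, 0 ≤ N x y) (hr : ∀ y, 0 < outputDist p N y → 0 < r y) :
    ∑ x, p x * relEntropy (N x) r =
      ∑ x, p x * ∑ y, N x y * log (N x y) - ∑ y, outputDist p N y * log (r y) := by
  have hsplit : ∀ x, p x * relEntropy (N x) r =
      p x * ∑ y, N x y * log (N x y) - ∑ y, p x * N x y * log (r y) := by
    intro x
    rcases (hp x).eq_or_lt with h | h
    · simp [← h]
    · rw [relEntropy_eq_sub (hN x) fun y hy =>
          hr y (lt_of_lt_of_le (mul_pos h hy) (mul_le_outputDist hp hN x y)),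
        mul_sub, mul_sum, mul_sum]
      simp only [mul_assoc]
  simp only [hsplit, sum_sub_distrib, outputDist, sum_mul]
  rw [sum_comm (f := fun x y => p x * N x y * log (r y))]

lemma mutInfo_eq_sum_relEntropy {p : X → ℝ} {N : X → Y → ℝ} (hp : ∀ x, 0 ≤ p x)
    (hN : ∀ x y, 0 ≤ N x y) :
    mutInfo p N = ∑ x, p x * relEntropy (N x) (outputDist p N) := by
  simp only [mutInfo, relEntropy, mul_sum]
  refine sum_congr rfl fun x _ => sum_congr rfl fun y _ => ?_
  split_ifs with h
  · rw [mul_assoc]; rfl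
  · rw [← mul_assoc, le_antisymm (not_lt.1 h) (mul_nonneg (hp x) (hN x y)), zero_mul]

/-- The "golden formula" of information theory. -/
lemma sum_mul_relEntropy_eq_mutInfo_add {p : X → ℝ} {N : X → Y → ℝ} {r : Y → ℝ}
    (hp : ∀ x, 0 ≤ p x) (hN : ∀ x y, 0 ≤ N x y) (hr : ∀ y, 0 < outputDist p N y → 0 < r y) :
    ∑ x, p x * relEntropy (N x) r = mutInfo p N + relEntropy (outputDist p N) r := by
  have hq : ∀ y, 0 ≤ outputDist p N y := fun y => sum_nonneg fun x _ => mul_nonneg (hp x) (hN x y)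
  rw [mutInfo_eq_sum_relEntropy hp hN, sum_mul_relEntropy_eq hp hN hr,
    sum_mul_relEntropy_eq hp hN fun _ h => h, relEntropy_eq_sub hq hr]
  ring

lemma mutInfo_le_sum_relEntropy {p : X → ℝ} {N : X → Y → ℝ} {r : Y → ℝ} (hp : IsDist p)
    (hN : IsChannel N) (hr : IsDist r) (hqr : ∀ y, 0 < outputDist p N y → 0 < r y) :
    mutInfo p N ≤ ∑ x, p x * relEntropy (N x) r := by
  rw [sum_mul_relEntropy_eq_mutInfo_add hp.1 hN.1 hqr]
  linarith [relEntropy_nonneg (isDist_outputDist hp hN) hr hqr]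

lemma continuousOn_mutInfo {N : X → Y → ℝ} (hN : ∀ x y, 0 ≤ N x y) :
    ContinuousOn (fun p => mutInfo p N) {p | IsDist p} := by
  have hcont : Continuous fun p : X → ℝ =>
      ∑ x, p x * ∑ y, N x y * log (N x y) - ∑ y, outputDist p N y * log (outputDist p N y) := by
    unfold outputDist
    fun_prop
  refine hcont.continuousOn.congr fun p hp => ?_
  rw [mutInfo_eq_sum_relEntropy hp.1 hN, sum_mul_relEntropy_eq hp.1 hN fun _ h => h]

end MutualInformation

lemma stdSimplex_nonempty (X : Type*) [Fintype X] [Nonempty X] : (stdSimplex ℝ X).Nonempty := by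
  classical exact ⟨_, single_mem_stdSimplex ℝ (Classical.arbitrary X)⟩

section Capacity

variable {X Y : Type*} [Fintype X] [Fintype Y]

lemma exists_isMaxOn_mutInfo [Nonempty X] {N : X → Y → ℝ} (hN : ∀ x y, 0 ≤ N x y) :
    ∃ p, IsDist p ∧ IsMaxOn (fun p => mutInfo p N) {p | IsDist p} p :=
  (isCompact_stdSimplex ℝ X).exists_isMaxOn (stdSimplex_nonempty X)
    (continuousOn_mutInfo hN)

lemma capacity_eq_of_isMaxOn {N : X → Y → ℝ} {p : X → ℝ} (hp : IsDist p)
    (hmax : IsMaxOn (fun p => mutInfo p N) {p | IsDist p} p) : capacity N = mutInfo p N :=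
  IsGreatest.csSup_eq ⟨⟨p, hp, rfl⟩, by rintro _ ⟨p', hp', rfl⟩; exact hmax hp'⟩

lemma capacity_le [Nonempty X] {N : X → Y → ℝ} {c : ℝ} (h : ∀ p, IsDist p → mutInfo p N ≤ c) :
    capacity N ≤ c :=
  csSup_le (let ⟨p, hp⟩ := stdSimplex_nonempty X; ⟨_, p, hp, rfl⟩)
    (by rintro _ ⟨p, hp, rfl⟩; exact h p hp)

/-- First-order optimality of a capacity-achieving input `p`, tested against moving a fraction
`t` of its mass to a single input `x₀`. -/
lemma relEntropy_mix_le_mutInfo {N : X → Y → ℝ} {p : X → ℝ} (hN : IsChannel N) (hp : IsDist p)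
    (hmax : IsMaxOn (fun p => mutInfo p N) {p | IsDist p} p) (x₀ : X) {t : ℝ} (ht0 : 0 < t)
    (ht1 : t < 1) :
    relEntropy (N x₀) (fun y => (1 - t) * outputDist p N y + t * N x₀ y) ≤ mutInfo p N := by
  classical
  set pt : X → ℝ := (1 - t) • p + t • Pi.single x₀ 1
  set r : Y → ℝ := fun y => (1 - t) * outputDist p N y + t * N x₀ y
  have hpt : IsDist pt :=
    convex_stdSimplex ℝ X hp (single_mem_stdSimplex ℝ x₀) (by linarith) ht0.le (by ring)
  have hr : outputDist pt N = r := by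
    funext y
    simp [pt, r, outputDist, add_mul, sum_add_distrib, mul_sum, mul_assoc, Pi.single_apply]
  have hqr : ∀ y, 0 < outputDist p N y → 0 < r y := fun y hy => by
    have := hN.1 x₀ y
    have : 0 < 1 - t := by linarith
    positivity
  have hmix : mutInfo pt N = (1 - t) * ∑ x, p x * relEntropy (N x) r + t * relEntropy (N x₀) r := by
    rw [mutInfo_eq_sum_relEntropy hpt.1 hN.1, hr]
    simp [pt, add_mul, sum_add_distrib, mul_sum, mul_assoc, Pi.single_apply]
  have hgap : 0 ≤ (1 - t) * relEntropy (outputDist p N) r :=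
    mul_nonneg (by linarith)
      (relEntropy_nonneg (isDist_outputDist hp hN) (hr ▸ isDist_outputDist hpt hN) hqr)
  have hle : mutInfo pt N ≤ mutInfo p N := hmax hpt
  rw [hmix, sum_mul_relEntropy_eq_mutInfo_add hp.1 hN.1 hqr] at hle
  refine le_of_mul_le_mul_left ?_ ht0
  linarith

lemma neg_log_support_mass_le_mutInfo {N : X → Y → ℝ} {p : X → ℝ} (hN : IsChannel N)
    (hp : IsDist p) (hmax : IsMaxOn (fun p => mutInfo p N) {p | IsDist p} p) (x₀ : X) {t : ℝ}
    (ht0 : 0 < t) (ht1 : t < 1) :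
    -log ((1 - t) * ∑ y with 0 < N x₀ y, outputDist p N y + t) ≤ mutInfo p N := by
  have hNx₀ : IsDist (N x₀) := ⟨hN.1 x₀, hN.2 x₀⟩
  have hq := isDist_outputDist hp hN
  have hmass : ∑ y with 0 < N x₀ y, ((1 - t) * outputDist p N y + t * N x₀ y) =
      (1 - t) * ∑ y with 0 < N x₀ y, outputDist p N y + t := by
    rw [sum_add_distrib, ← mul_sum, ← mul_sum, hNx₀.sum_filter_pos, mul_one]
  rw [← hmass]
  calc _ ≤ relEntropy (N x₀) (fun y => (1 - t) * outputDist p N y + t * N x₀ y) :=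
        neg_log_sum_le_relEntropy hNx₀ fun y hy => by
          have := hq.1 y
          have : 0 < 1 - t := by linarith
          positivity
    _ ≤ mutInfo p N := relEntropy_mix_le_mutInfo hN hp hmax x₀ ht0 ht1

end Capacity

section Packing

variable {X Y : Type*} [Fintype X] [Fintype Y]

def IsFracPacking (Γ : X → Y → ℝ) (w : X → ℝ) : Prop :=
  (∀ x, 0 ≤ w x) ∧ ∀ y, ∑ x, w x * Γ x y ≤ 1

def IsFracCover (Γ : X → Y → ℝ) (v : Y → ℝ) : Prop :=
  (∀ y, 0 ≤ v y) ∧ ∀ x, 1 ≤ ∑ y, Γ x y * v y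

lemma IsFracPacking.sum_le_of_isFracCover {Γ : X → Y → ℝ} {w : X → ℝ} {v : Y → ℝ}
    (hw : IsFracPacking Γ w) (hv : IsFracCover Γ v) : ∑ x, w x ≤ ∑ y, v y :=
  calc ∑ x, w x ≤ ∑ x, w x * ∑ y, Γ x y * v y :=
        sum_le_sum fun x _ => le_mul_of_one_le_right (hw.1 x) (hv.2 x)
    _ = ∑ y, (∑ x, w x * Γ x y) * v y := by
        simp only [mul_sum, sum_mul, mul_assoc]
        exact sum_comm
    _ ≤ ∑ y, v y := sum_le_sum fun y _ => mul_le_of_le_one_left (hv.1 y) (hw.2 y)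

lemma fracPack_eq_of_sum_eq {Γ : X → Y → ℝ} {w : X → ℝ} {v : Y → ℝ} (hw : IsFracPacking Γ w)
    (hv : IsFracCover Γ v) (hwv : ∑ x, w x = ∑ y, v y) : fracPack Γ = ∑ x, w x :=
  IsGreatest.csSup_eq ⟨⟨w, hw.1, hw.2, rfl⟩, by
    rintro _ ⟨w', hw'₀, hw'₁, rfl⟩
    exact hwv ▸ IsFracPacking.sum_le_of_isFracCover ⟨hw'₀, hw'₁⟩ hv⟩

/-- Strong LP duality, from the minimax theorem for the matrix game with payoff `Γ`: if `(s, r)`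
is a saddle point of value `λ`, then `s / λ` is a packing and `r / λ` a cover. -/
lemma exists_fracPacking_fracCover_sum_eq [Nonempty X] {Γ : X → Y → ℝ} (hΓ : ∀ x y, 0 ≤ Γ x y)
    (hcover : ∀ x, ∃ y, Γ x y = 1) :
    ∃ w v, IsFracPacking Γ w ∧ IsFracCover Γ v ∧ ∑ x, w x = ∑ y, v y ∧ 0 < ∑ x, w x := by
  classical
  have : Nonempty Y := ⟨(hcover (Classical.arbitrary X)).choose⟩
  set B : (X → ℝ) →ₗ[ℝ] (Y → ℝ) →ₗ[ℝ] ℝ := Matrix.toLinearMap₂' ℝ (Matrix.of Γ)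
  obtain ⟨s, hs, r, hr, hsaddle⟩ := Sion.exists_isSaddlePointOn (f := fun s r => B s r)
    (stdSimplex_nonempty X) (convex_stdSimplex ℝ X) (isCompact_stdSimplex ℝ X)
    (fun r _ => (B.flip r).continuous_of_finiteDimensional.continuousOn.lowerSemicontinuousOn)
    (fun r _ => ((B.flip r).convexOn (convex_stdSimplex ℝ X)).quasiconvexOn)
    (convex_stdSimplex ℝ Y) (stdSimplex_nonempty Y) (isCompact_stdSimplex ℝ Y)
    (fun s _ => (B s).continuous_of_finiteDimensional.continuousOn.upperSemicontinuousOn)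
    (fun s _ => ((B s).concaveOn (convex_stdSimplex ℝ Y)).quasiconcaveOn)
  set lam := B s r
  have hcol : ∀ y, ∑ x, s x * Γ x y ≤ lam := fun y => by
    simpa [lam, B, Matrix.toLinearMap₂'_apply, Pi.single_apply, mul_comm] using
      hsaddle s hs (Pi.single y 1) (single_mem_stdSimplex ℝ y)
  have hrow : ∀ x, lam ≤ ∑ y, Γ x y * r y := fun x => by
    simpa [lam, B, Matrix.toLinearMap₂'_apply, Pi.single_apply, mul_comm] using
      hsaddle (Pi.single x 1) (single_mem_stdSimplex ℝ x) r hr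
  have hlam : 0 < lam := by
    obtain ⟨x, -, hx⟩ := exists_lt_of_sum_lt (by simp [hs.2] : ∑ x, (0 : ℝ) < ∑ x, s x)
    obtain ⟨y, hy⟩ := hcover x
    calc 0 < s x * Γ x y := by rw [hy, mul_one]; exact hx
      _ ≤ ∑ x, s x * Γ x y :=
          single_le_sum (f := fun x => s x * Γ x y) (fun x _ => mul_nonneg (hs.1 x) (hΓ x y))
            (mem_univ x)
      _ ≤ lam := hcol y
  refine ⟨fun x => s x / lam, fun y => r y / lam, ⟨fun x => div_nonneg (hs.1 x) hlam.le, ?_⟩,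
    ⟨fun y => div_nonneg (hr.1 y) hlam.le, ?_⟩, ?_, ?_⟩
  · intro y
    simpa [div_mul_eq_mul_div, ← sum_div, div_le_one hlam] using hcol y
  · intro x
    simpa [mul_div_assoc', ← sum_div, le_div_iff₀ hlam] using hrow x
  · rw [← sum_div, ← sum_div, hs.2, hr.2]
  · rw [← sum_div, hs.2]
    exact one_div_pos.2 hlam

/-- The witness is `N x y ∝ Γ x y * v y`: each of its rows has relative entropy at most
`log ∑ v` from `v / ∑ v`. -/
lemma IsFracCover.exists_channel_capacity_le [Nonempty X] {Γ : X → Y → ℝ}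
    (hΓ : ∀ x y, Γ x y = 0 ∨ Γ x y = 1) {v : Y → ℝ} (hv : IsFracCover Γ v) :
    ∃ N, IsChannel N ∧ SupportedOn Γ N ∧ capacity N ≤ log (∑ y, v y) := by
  set c : X → ℝ := fun x => ∑ y, Γ x y * v y
  set A := ∑ y, v y
  have hc : ∀ x, 0 < c x := fun x => one_pos.trans_le (hv.2 x)
  have hcA : ∀ x, c x ≤ A := fun x => sum_le_sum fun y _ => by
    rcases hΓ x y with h | h <;> simp [h, hv.1 y]
  have hA : 0 < A := (hc (Classical.arbitrary X)).trans_le (hcA _)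
  set N : X → Y → ℝ := fun x y => Γ x y * v y / c x
  have hN : IsChannel N := by
    refine ⟨fun x y => div_nonneg (mul_nonneg ?_ (hv.1 y)) (hc x).le, fun x => ?_⟩
    · rcases hΓ x y with h | h <;> simp [h]
    · rw [← sum_div, div_self (hc x).ne']
  have hsupp : SupportedOn Γ N := fun x y h =>
    (hΓ x y).resolve_left fun h0 => by simp [N, h0] at h
  set r : Y → ℝ := fun y => v y / A
  have hr : IsDist r := ⟨fun y => div_nonneg (hv.1 y) hA.le, by rw [← sum_div, div_self hA.ne']⟩
  have hNr : ∀ x y, 0 < N x y → 0 < r y := fun x y h =>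
    div_pos (lt_of_le_of_ne (hv.1 y) fun h0 => by simp [N, ← h0] at h) hA
  refine ⟨N, hN, hsupp, capacity_le fun p hp => ?_⟩
  have hqr : ∀ y, 0 < outputDist p N y → 0 < r y := fun y hq => by
    obtain ⟨x, -, hx⟩ := exists_lt_of_sum_lt (by simpa using hq : ∑ x, (0 : ℝ) < outputDist p N y)
    exact hNr x y (pos_of_mul_pos_right hx (hp.1 x))
  have hratio : ∀ x y, 0 < N x y → N x y / r y ≤ A := fun x y h => by
    have hvy : v y ≠ 0 := (div_pos_iff_of_pos_right hA).1 (hNr x y h) |>.ne'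
    calc N x y / r y = A / c x := by
          simp only [N, r, hsupp x y h, one_mul]
          field_simp
      _ ≤ A := div_le_self hA.le (hv.2 x)
  calc mutInfo p N ≤ ∑ x, p x * relEntropy (N x) r := mutInfo_le_sum_relEntropy hp hN hr hqr
    _ ≤ ∑ x, p x * log A := sum_le_sum fun x _ => mul_le_mul_of_nonneg_left
        (relEntropy_le_log ⟨hN.1 x, hN.2 x⟩ (hNr x) (hratio x)) (hp.1 x)
    _ = log A := by rw [← sum_mul, hp.2, one_mul]

lemma exists_le_inv_of_sum_mul_le [Nonempty X] {w f : X → ℝ} (hw : ∀ x, 0 ≤ w x)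
    (hpos : 0 < ∑ x, w x) (h : ∑ x, w x * f x ≤ 1) : ∃ x, f x ≤ (∑ x, w x)⁻¹ := by
  obtain ⟨x₀, -, hmin⟩ := exists_min_image univ f univ_nonempty
  refine ⟨x₀, ?_⟩
  rw [← one_div, le_div_iff₀ hpos]
  calc f x₀ * ∑ x, w x = ∑ x, w x * f x₀ := by rw [mul_sum]; simp only [mul_comm]
    _ ≤ ∑ x, w x * f x := sum_le_sum fun x hx => mul_le_mul_of_nonneg_left (hmin x hx) (hw x)
    _ ≤ 1 := h

lemma IsFracPacking.exists_sum_mul_le_inv [Nonempty X] {Γ : X → Y → ℝ} {w : X → ℝ}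
    (hw : IsFracPacking Γ w) (hpos : 0 < ∑ x, w x) {q : Y → ℝ} (hq : IsDist q) :
    ∃ x, ∑ y, Γ x y * q y ≤ (∑ x, w x)⁻¹ := by
  refine exists_le_inv_of_sum_mul_le hw.1 hpos ?_
  calc ∑ x, w x * ∑ y, Γ x y * q y = ∑ y, (∑ x, w x * Γ x y) * q y := by
        simp only [mul_sum, sum_mul, mul_assoc]
        exact sum_comm
    _ ≤ ∑ y, q y := sum_le_sum fun y _ => mul_le_of_le_one_left (hq.1 y) (hw.2 y)
    _ = 1 := hq.2

lemma log_le_capacity [Nonempty X] {Γ : X → Y → ℝ} (hΓ : ∀ x y, 0 ≤ Γ x y) {w : X → ℝ}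
    (hw : IsFracPacking Γ w) (hpos : 0 < ∑ x, w x) {N : X → Y → ℝ} (hN : IsChannel N)
    (hsupp : SupportedOn Γ N) : log (∑ x, w x) ≤ capacity N := by
  obtain ⟨p, hp, hmax⟩ := exists_isMaxOn_mutInfo hN.1
  rw [capacity_eq_of_isMaxOn hp hmax]
  set A := ∑ x, w x
  have hq := isDist_outputDist hp hN
  obtain ⟨x₀, hx₀⟩ := hw.exists_sum_mul_le_inv hpos hq
  set m := ∑ y with 0 < N x₀ y, outputDist p N y
  have hm₀ : 0 ≤ m := sum_nonneg fun y _ => hq.1 y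
  have hm : m ≤ A⁻¹ := by
    refine le_trans ?_ hx₀
    calc m = ∑ y with 0 < N x₀ y, Γ x₀ y * outputDist p N y :=
          sum_congr rfl fun y hy => by rw [hsupp x₀ y (by simpa using hy), one_mul]
      _ ≤ ∑ y, Γ x₀ y * outputDist p N y :=
          sum_le_sum_of_subset_of_nonneg (subset_univ _) fun y _ _ =>
            mul_nonneg (hΓ x₀ y) (hq.1 y)
  have hbound : ∀ t ∈ Set.Ioo (0 : ℝ) 1, -log ((1 - t) * A⁻¹ + t) ≤ mutInfo p N :=
    fun t ⟨ht0, ht1⟩ => le_trans (neg_le_neg (log_le_log (by nlinarith) (by nlinarith)))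
      (neg_log_support_mass_le_mutInfo hN hp hmax x₀ ht0 ht1)
  have hlim : Filter.Tendsto (fun t => -log ((1 - t) * A⁻¹ + t)) (nhdsWithin 0 (Set.Ioi 0))
      (nhds (log A)) := by
    have hcont : ContinuousAt (fun t => -log ((1 - t) * A⁻¹ + t)) 0 :=
      ((by fun_prop : ContinuousAt (fun t : ℝ => (1 - t) * A⁻¹ + t) 0).log
        (by simp [hpos.ne'])).neg
    simpa [log_inv] using hcont.tendsto.mono_left nhdsWithin_le_nhds
  exact le_of_tendsto hlim (Filter.mem_of_superset (Ioo_mem_nhdsGT one_pos) hbound)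

end Packing

theorem min_capacity_eq_log_fracPack_general
    {X Y : Type*} [Fintype X] [Fintype Y] [Nonempty X]
    (Γ : X → Y → ℝ) (hΓ : ∀ x y, Γ x y = 0 ∨ Γ x y = 1)
    (hcover : ∀ x, ∃ y, Γ x y = 1) :
    IsLeast { c | ∃ N, IsChannel N ∧ SupportedOn Γ N ∧ c = capacity N }
      (Real.log (fracPack Γ)) := by
  have hΓ₀ : ∀ x y, 0 ≤ Γ x y := fun x y => by rcases hΓ x y with h | h <;> simp [h]
  obtain ⟨w, v, hw, hv, hwv, hpos⟩ := exists_fracPacking_fracCover_sum_eq hΓ₀ hcover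
  rw [fracPack_eq_of_sum_eq hw hv hwv]
  obtain ⟨N₀, hN₀, hsupp₀, hcap₀⟩ := hv.exists_channel_capacity_le hΓ
  have hlower : ∀ N, IsChannel N → SupportedOn Γ N → log (∑ x, w x) ≤ capacity N :=
    fun N hN hsupp => log_le_capacity hΓ₀ hw hpos hN hsupp
  refine ⟨⟨N₀, hN₀, hsupp₀, le_antisymm (hlower N₀ hN₀ hsupp₀) (hwv ▸ hcap₀)⟩, ?_⟩
  rintro _ ⟨N, hN, hsupp, rfl⟩
  exact hlower N hN hsupp

/-- The minimum Shannon capacity over all channels supported on Γ equals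
log α*(Γ), and is attained. -/
theorem min_capacity_eq_log_fracPack
    {X Y : Type*} [Fintype X] [Fintype Y] [Nonempty X] [Nonempty Y]
    (Γ : X → Y → ℝ) (hΓ : ∀ x y, Γ x y = 0 ∨ Γ x y = 1)
    (hcover : ∀ x, ∃ y, Γ x y = 1) :
    IsLeast { c | ∃ N, IsChannel N ∧ SupportedOn Γ N ∧ c = capacity N }
      (Real.log (fracPack Γ)) :=
  min_capacity_eq_log_fracPack_general Γ hΓ hcover
end

section
/- Let X, Y be nonempty finite sets, Γ : X × Y → {0,1} with every x having at least one neighbor, and suppose w : X → ℝ and v : Y → ℝ satisfy: w ≥ 0, v ≥ 0, ∑_x w_x Γ(x,y) ≤ 1 for all y, M_x := ∑_y Γ(x,y) v_y ≥ 1 for all x, ∑_x w_x = ∑_y v_y = α > 0, and the complementary slackness conditions: (M_x > 1 → w_x = 0) for all x, and (v_y > 0 → ∑_x w_x Γ(x,y) = 1) for all y. Define the channel N(x,y) = Γ(x,y) v_y / M_x, the input distribution p_x = w_x / α, and q_y = ∑_x p_x N(x,y). Then: (a) q_y = v_y / α for all y; (b) for every x ∈ X, ∑_{y with N(x,y) >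 0} N(x,y) log(N(x,y)/q_y) = log(α / M_x) ≤ log α, with equality whenever p_x > 0; and consequently (c) the mutual information satisfies I(p;N) = log α. -/
/-!
Complementary slackness makes `w x / M x = w x` and `∑ x, w x * Γ x y = 1` wherever `v y > 0`,
so the output distribution is `q = v / α`. On the support of row `x` of the channel, `Γ x y = 1`,
hence `N x y / q y = α / M x` is constant along the row and the row's divergence from `q` is
`log (α / M x)`. Inputs used by `p` have `w x > 0`, so `M x = 1` there, and averaging the rows over
`p` gives `I(p; N) = log α`.
-/

open Finset Real

theorem sum_ite_mul_log_div_eq_log {Y : Type*} [Fintype Y] {n q : Y → ℝ} {c : ℝ}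
    (hn : ∀ y, 0 ≤ n y) (hsum : ∑ y, n y = 1) (hc : ∀ y, 0 < n y → n y / q y = c) :
    (∑ y, if 0 < n y then n y * log (n y / q y) else 0) = log c := by
  calc (∑ y, if 0 < n y then n y * log (n y / q y) else 0)
      = ∑ y, n y * log c := by
        refine sum_congr rfl fun y _ => ?_
        split_ifs with h
        · rw [hc y h]
        · rw [le_antisymm (not_lt.mp h) (hn y), zero_mul]
    _ = log c := by rw [← sum_mul, hsum, one_mul]

theorem mutInfo_eq_of_forall_pos {X Y : Type*} [Fintype X] [Fintype Y]
    {p : X → ℝ} {N : X → Y → ℝ} {c : ℝ}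
    (hp : ∀ x, 0 ≤ p x) (hsum : ∑ x, p x = 1)
    (hrow : ∀ x, 0 < p x →
      (∑ y, if 0 < N x y then N x y * log (N x y / ∑ x', p x' * N x' y) else 0) = c) :
    mutInfo p N = c := by
  unfold mutInfo
  calc (∑ x, ∑ y, if 0 < p x * N x y then
          p x * N x y * log (N x y / ∑ x', p x' * N x' y) else 0)
      = ∑ x, p x * c := by
        refine sum_congr rfl fun x _ => ?_
        rcases (hp x).eq_or_lt with h0 | hpos
        · simp [← h0]
        rw [← hrow x hpos, mul_sum]
        refine sum_congr rfl fun y _ => ?_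
        simp only [mul_pos_iff_of_pos_left hpos]
        split_ifs <;> ring
    _ = c := by rw [← sum_mul, hsum, one_mul]

theorem div_eq_self_of_slack {a m : ℝ} (hm : 1 ≤ m) (hslack : 1 < m → a = 0) : a / m = a := by
  rcases hm.eq_or_lt with h | h
  · rw [← h, div_one]
  · rw [hslack h, zero_div]

theorem sum_div_mul_packing_channel_eq {X Y : Type*} [Fintype X] [Fintype Y]
    {Γ : X → Y → ℝ} {w : X → ℝ} {v : Y → ℝ} (α : ℝ) (hv : ∀ y, 0 ≤ v y)
    (hM : ∀ x, 1 ≤ ∑ y, Γ x y * v y) (hcs1 : ∀ x, 1 < ∑ y, Γ x y * v y → w x = 0)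
    (hcs2 : ∀ y, 0 < v y → ∑ x, w x * Γ x y = 1) (y : Y) :
    ∑ x, w x / α * (Γ x y * v y / ∑ y', Γ x y' * v y') = v y / α := by
  have hrow : ∀ x,
      w x / α * (Γ x y * v y / ∑ y', Γ x y' * v y') = w x * Γ x y * v y / α := by
    intro x
    calc w x / α * (Γ x y * v y / ∑ y', Γ x y' * v y')
        = w x / (∑ y', Γ x y' * v y') * Γ x y * v y / α := by ring
      _ = w x * Γ x y * v y / α := by rw [div_eq_self_of_slack (hM x) (hcs1 x)]
  simp only [hrow, ← sum_div, ← sum_mul]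
  rcases (hv y).eq_or_lt with h | h
  · simp [← h]
  · rw [hcs2 y h, one_mul]

theorem mul_div_div_div_eq_of_pos {g v m α : ℝ} (hg : g = 0 ∨ g = 1) (hpos : 0 < g * v / m) :
    g * v / m / (v / α) = α / m := by
  rcases hg with rfl | rfl
  · simp at hpos
  have hv : v ≠ 0 := by
    rintro rfl
    simp at hpos
  rw [one_mul, div_div_div_cancel_left' _ _ hv]

open Classical in
theorem channel_from_LP_solutions_general
    {X Y : Type*} [Fintype X] [Fintype Y]
    (Γ : X → Y → ℝ) (hΓ : ∀ x y, Γ x y = 0 ∨ Γ x y = 1)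
    (w : X → ℝ) (v : Y → ℝ)
    (hw : ∀ x, 0 ≤ w x) (hv : ∀ y, 0 ≤ v y)
    (hM : ∀ x, 1 ≤ ∑ y, Γ x y * v y)
    (α : ℝ) (hα : 0 < α)
    (hsumw : ∑ x, w x = α)
    (hcs1 : ∀ x, 1 < ∑ y, Γ x y * v y → w x = 0)
    (hcs2 : ∀ y, 0 < v y → ∑ x, w x * Γ x y = 1) :
    let M : X → ℝ := fun x => ∑ y, Γ x y * v y
    let N : X → Y → ℝ := fun x y => Γ x y * v y / M x
    let p : X → ℝ := fun x => w x / α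
    let q : Y → ℝ := fun y => ∑ x, p x * N x y
    (∀ y, q y = v y / α) ∧
    (∀ x, (∑ y, if 0 < N x y then N x y * Real.log (N x y / q y) else 0)
        = Real.log (α / M x) ∧
      Real.log (α / M x) ≤ Real.log α ∧
      (0 < p x → Real.log (α / M x) = Real.log α)) ∧
    mutInfo p N = Real.log α := by
  intro M N p q
  have hMpos : ∀ x, 0 < M x := fun x => one_pos.trans_le (hM x)
  have hΓnn : ∀ x y, 0 ≤ Γ x y := fun x y => by rcases hΓ x y with h | h <;> simp [h]
  have hN : ∀ x y, 0 ≤ N x y := fun x y =>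
    div_nonneg (mul_nonneg (hΓnn x y) (hv y)) (hMpos x).le
  have hq : ∀ y, q y = v y / α := sum_div_mul_packing_channel_eq α hv hM hcs1 hcs2
  have hrow : ∀ x, (∑ y, if 0 < N x y then N x y * log (N x y / q y) else 0) = log (α / M x) :=
    fun x => sum_ite_mul_log_div_eq_log (hN x)
      (by simp only [N, ← sum_div]; exact div_self (hMpos x).ne')
      fun y hy => by rw [hq y]; exact mul_div_div_div_eq_of_pos (hΓ x y) hy
  have hused : ∀ x, 0 < p x → log (α / M x) = log α := fun x hx => by
    have hwx : w x ≠ 0 := fun h => by simp [p, h] at hx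
    have hMx : M x = 1 := ((hM x).eq_of_not_lt fun h => hwx (hcs1 x h)).symm
    rw [hMx, div_one]
  have hp : ∀ x, 0 ≤ p x := fun x => div_nonneg (hw x) hα.le
  have hsump : ∑ x, p x = 1 := by rw [← sum_div, hsumw, div_self hα.ne']
  refine ⟨hq, fun x => ⟨hrow x, ?_, hused x⟩, ?_⟩
  · exact log_le_log (div_pos hα (hMpos x)) (div_le_self hα.le (hM x))
  · exact mutInfo_eq_of_forall_pos hp hsump fun x hx => (hrow x).trans (hused x hx)

open Classical in
/-- From an optimal primal/dual pair for the fractional packing LP, satisfying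
complementary slackness, one constructs a channel and input distribution with
mutual information exactly log α. -/
theorem channel_from_LP_solutions
    {X Y : Type*} [Fintype X] [Fintype Y] [Nonempty X] [Nonempty Y]
    (Γ : X → Y → ℝ) (hΓ : ∀ x y, Γ x y = 0 ∨ Γ x y = 1)
    (hcover : ∀ x, ∃ y, Γ x y = 1)
    (w : X → ℝ) (v : Y → ℝ)
    (hw : ∀ x, 0 ≤ w x) (hv : ∀ y, 0 ≤ v y)
    (hpack : ∀ y, ∑ x, w x * Γ x y ≤ 1)
    (hM : ∀ x, 1 ≤ ∑ y, Γ x y * v y)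
    (α : ℝ) (hα : 0 < α)
    (hsumw : ∑ x, w x = α) (hsumv : ∑ y, v y = α)
    (hcs1 : ∀ x, 1 < ∑ y, Γ x y * v y → w x = 0)
    (hcs2 : ∀ y, 0 < v y → ∑ x, w x * Γ x y = 1) :
    let M : X → ℝ := fun x => ∑ y, Γ x y * v y
    let N : X → Y → ℝ := fun x y => Γ x y * v y / M x
    let p : X → ℝ := fun x => w x / α
    let q : Y → ℝ := fun y => ∑ x, p x * N x y
    (∀ y, q y = v y / α) ∧
    (∀ x, (∑ y, if 0 < N x y then N x y * Real.log (N x y / q y) else 0)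
        = Real.log (α / M x) ∧
      Real.log (α / M x) ≤ Real.log α ∧
      (0 < p x → Real.log (α / M x) = Real.log α)) ∧
    mutInfo p N = Real.log α :=
  channel_from_LP_solutions_general Γ hΓ w v hw hv hM α hα hsumw hcs1 hcs2
end

section
/- Let X and E be n×n complex matrices with X positive semidefinite and 0 ≤ E ≤ I (Loewner order). Then tr(XE) is a nonnegative real number and tr(XE) ≤ ‖XE‖₁ ≤ √(tr X) · √(tr(XE)), where ‖M‖₁ = tr √(M† M) is the trace norm (sum of singular values). -/
open scoped ComplexOrder

/-- The trace norm of a complex matrix: `tr √(M† M)`. -/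
noncomputable def traceNorm {n : ℕ} (M : Matrix (Fin n) (Fin n) ℂ) : ℝ :=
  (((Matrix.isHermitian_conjTranspose_mul_self M).eigenvectorUnitary.1 *
    Matrix.diagonal (((↑) : ℝ → ℂ) ∘ (√·) ∘ (Matrix.isHermitian_conjTranspose_mul_self M).eigenvalues) *
    (star (Matrix.isHermitian_conjTranspose_mul_self M).eigenvectorUnitary :
      Matrix (Fin n) (Fin n) ℂ)).trace).re

/-!
With `R = √X` we have `tr(XE) = tr(R E R) ≥ 0`. Both trace-norm bounds come from the polar
decomposition `M = W |M|`, where `W = M (M†M)^{-1/2}` (inverting only on the support) satisfies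
`W† M = |M|` and `W† W ≤ 1`, combined with Cauchy–Schwarz for the Frobenius inner product.
Writing `tr M = tr(√|M| · W √|M|)` gives `Re tr M ≤ tr |M|`; writing
`tr |R · RE| = tr(RE W† · R)` gives `‖R · RE‖₁ ≤ ‖R‖₂ ‖RE‖₂`, where `‖R‖₂² = tr X` and
`‖RE‖₂² = tr(R E² R) ≤ tr(R E R) = tr(XE)` because `0 ≤ E ≤ 1` forces `E² ≤ E`.
-/

open scoped MatrixOrder
open RCLike

namespace Matrix

variable {m 𝕜 : Type*} [Fintype m] [RCLike 𝕜]

lemma re_trace_mono {A B : Matrix m m 𝕜} (h : A ≤ B) : re A.trace ≤ re B.trace := by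
  have := (nonneg_iff.mp (le_iff.mp h).trace_nonneg).1
  rwa [trace_sub, map_sub, sub_nonneg] at this

variable [DecidableEq m]

lemma norm_trace_mul_le (A B : Matrix m m 𝕜) :
    ‖(A * B).trace‖ ≤ √(re (A * Aᴴ).trace) * √(re (Bᴴ * B).trace) := by
  -- the Frobenius inner product `⟪X, Y⟫ = tr (Y * 1 * Xᴴ)`
  let := toMatrixSeminormedAddCommGroup (1 : Matrix m m 𝕜) PosSemidef.one
  let := toMatrixInnerProductSpace (1 : Matrix m m 𝕜) PosSemidef.one
  have hnorm (X : Matrix m m 𝕜) : ‖X‖ = √(re (X * Xᴴ).trace) := by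
    rw [norm_eq_sqrt_re_inner (𝕜 := 𝕜)]
    change √(re (X * 1 * Xᴴ).trace) = _
    rw [mul_one]
  have h := norm_inner_le_norm (𝕜 := 𝕜) Bᴴ A
  change ‖(A * 1 * Bᴴᴴ).trace‖ ≤ ‖Bᴴ‖ * ‖A‖ at h
  rwa [hnorm, hnorm, mul_one, conjTranspose_conjTranspose, mul_comm (√_)] at h

lemma mul_self_le_self {E : Matrix m m 𝕜} (h0 : 0 ≤ E) (h1 : E ≤ 1) : E * E ≤ E := by
  set S := CFC.sqrt E
  have hS : S * S = E := CFC.sqrt_mul_sqrt_self E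
  calc E * E = S * (S * S) * S := by rw [← hS]; noncomm_ring
    _ = S * E * S := by rw [hS]
    _ ≤ S * 1 * S := conjugate_le_conjugate_of_nonneg h1 (CFC.sqrt_nonneg E)
    _ = E := by rw [mul_one, hS]

lemma cfc_mul_mul_cfc (f : ℝ → ℝ) {H : Matrix m m 𝕜} (hH : IsSelfAdjoint H) :
    cfc f H * H * cfc f H = cfc (fun x ↦ f x * x * f x) H := by
  have hc (g : ℝ → ℝ) : ContinuousOn g (spectrum ℝ H) := H.finite_real_spectrum.continuousOn g
  rw [cfc_mul (fun x ↦ f x * x) f H (hc _) (hc _), cfc_mul f (fun x ↦ x) H (hc _) (hc _),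
    cfc_id' ℝ H]

lemma abs_eq_cfc_sqrt (M : Matrix m m 𝕜) : CFC.abs M = cfc Real.sqrt (Mᴴ * M) := by
  rw [CFC.abs, CFC.sqrt_eq_real_sqrt _ (star_mul_self_nonneg M), cfcₙ_eq_cfc]
  rfl

lemma exists_mul_abs_eq (M : Matrix m m 𝕜) :
    ∃ W : Matrix m m 𝕜, W * CFC.abs M = M ∧ Wᴴ * M = CFC.abs M ∧ Wᴴ * W ≤ 1 := by
  set H := Mᴴ * M
  have hH : 0 ≤ H := star_mul_self_nonneg M
  have hc (g : ℝ → ℝ) : ContinuousOn g (spectrum ℝ H) := H.finite_real_spectrum.continuousOn g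
  -- `(√0)⁻¹ = 0`, so `G` inverts `|M|` on its support and vanishes on its kernel
  set G := cfc (fun x ↦ (√x)⁻¹) H
  have hG : Gᴴ = G := IsSelfAdjoint.star_eq (cfc_predicate _ H)
  set Q := cfc (fun x ↦ (√x)⁻¹ * √x - 1) H with hQ_def
  have hQ : Qᴴ = Q := IsSelfAdjoint.star_eq (cfc_predicate _ H)
  have hGQ : G * cfc Real.sqrt H = Q + 1 := by
    rw [← cfc_mul _ _ H (hc _) (hc _), hQ_def, cfc_sub _ (fun _ ↦ 1) H (hc _) (hc _),
      cfc_const_one ℝ H, sub_add_cancel]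
  have hMQ : M * Q = 0 := by
    rw [← conjTranspose_mul_self_eq_zero, conjTranspose_mul, hQ, mul_assoc, ← mul_assoc Mᴴ,
      ← mul_assoc, cfc_mul_mul_cfc _ hH.isSelfAdjoint, ← cfc_zero ℝ H]
    refine cfc_congr fun x hx ↦ ?_
    rcases (spectrum_nonneg_of_nonneg hH hx).eq_or_lt with rfl | hpos
    · simp
    · simp [inv_mul_cancel₀ (Real.sqrt_pos.mpr hpos).ne']
  refine ⟨M * G, ?_, ?_, ?_⟩
  · rw [abs_eq_cfc_sqrt, mul_assoc, hGQ, mul_add, hMQ, zero_add, mul_one]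
  · rw [abs_eq_cfc_sqrt, conjTranspose_mul, hG, mul_assoc]
    calc G * H = cfc (fun x ↦ (√x)⁻¹ * x) H := by
          rw [cfc_mul _ (fun x ↦ x) H (hc _) (hc _), cfc_id' ℝ H]
      _ = cfc Real.sqrt H := cfc_congr fun x _ ↦ by rw [← div_eq_inv_mul, Real.div_sqrt]
  · rw [conjTranspose_mul, hG, mul_assoc, ← mul_assoc Mᴴ, ← mul_assoc,
      cfc_mul_mul_cfc _ hH.isSelfAdjoint]
    refine cfc_le_one _ H fun x _ ↦ ?_
    rw [inv_mul_eq_div, Real.div_sqrt, ← div_eq_mul_inv]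
    exact div_self_le_one _

lemma re_trace_le_re_trace_abs (M : Matrix m m 𝕜) : re M.trace ≤ re (CFC.abs M).trace := by
  obtain ⟨W, hWM, -, hW⟩ := exists_mul_abs_eq M
  set T := CFC.sqrt (CFC.abs M)
  have hT : Tᴴ = T := IsSelfAdjoint.star_eq (CFC.sqrt_nonneg _).isSelfAdjoint
  have hTT : T * T = CFC.abs M := CFC.sqrt_mul_sqrt_self _
  have hM : M.trace = (T * (W * T)).trace := by
    rw [trace_mul_comm, mul_assoc, hTT, hWM]
  have hWT : re ((W * T)ᴴ * (W * T)).trace ≤ re (CFC.abs M).trace := by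
    have h := re_trace_mono (star_left_conjugate_le_conjugate hW T)
    rw [star_eq_conjTranspose, hT, mul_one, hTT] at h
    simpa only [conjTranspose_mul, hT, mul_assoc] using h
  calc re M.trace ≤ ‖(T * (W * T)).trace‖ := hM ▸ re_le_norm _
    _ ≤ √(re (T * Tᴴ).trace) * √(re ((W * T)ᴴ * (W * T)).trace) := norm_trace_mul_le _ _
    _ ≤ √(re (CFC.abs M).trace) * √(re (CFC.abs M).trace) := by
      rw [hT, hTT]; gcongr
    _ = re (CFC.abs M).trace :=
      Real.mul_self_sqrt (nonneg_iff.mp (nonneg_iff_posSemidef.mp (CFC.abs_nonneg M)).trace_nonneg).1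

lemma re_trace_abs_mul_le (A B : Matrix m m 𝕜) :
    re (CFC.abs (A * B)).trace ≤ √(re (Aᴴ * A).trace) * √(re (B * Bᴴ).trace) := by
  obtain ⟨W, -, hWM, hW⟩ := exists_mul_abs_eq (A * B)
  have hBW : re (B * Wᴴ * (B * Wᴴ)ᴴ).trace ≤ re (B * Bᴴ).trace := by
    have h := re_trace_mono (star_right_conjugate_le_conjugate hW B)
    rw [star_eq_conjTranspose, mul_one] at h
    simpa only [conjTranspose_mul, conjTranspose_conjTranspose, mul_assoc] using h
  calc re (CFC.abs (A * B)).trace = re (B * Wᴴ * A).trace := by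
        rw [← hWM, ← mul_assoc, trace_mul_cycle]
    _ ≤ ‖(B * Wᴴ * A).trace‖ := re_le_norm _
    _ ≤ √(re (B * Wᴴ * (B * Wᴴ)ᴴ).trace) * √(re (Aᴴ * A).trace) := norm_trace_mul_le _ _
    _ ≤ √(re (Aᴴ * A).trace) * √(re (B * Bᴴ).trace) := by
      rw [mul_comm]; gcongr

end Matrix

open Matrix

lemma traceNorm_eq_re_trace_abs {n : ℕ} (M : Matrix (Fin n) (Fin n) ℂ) :
    traceNorm M = (CFC.abs M).trace.re := by
  rw [abs_eq_cfc_sqrt, (isHermitian_conjTranspose_mul_self M).cfc_eq]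
  rfl

/-- For `X ⪰ 0` and `0 ≤ E ≤ I`, `tr(XE)` is a nonnegative real number and
`tr(XE) ≤ ‖XE‖₁ ≤ √(tr X) √(tr XE)`. -/
theorem trace_mul_le_traceNorm_le_sqrt
    {n : ℕ} (X E : Matrix (Fin n) (Fin n) ℂ)
    (hX : X.PosSemidef) (hE : E.PosSemidef) (hE1 : (1 - E).PosSemidef) :
    (X * E).trace.im = 0 ∧
    0 ≤ (X * E).trace.re ∧
    (X * E).trace.re ≤ traceNorm (X * E) ∧
    traceNorm (X * E) ≤ Real.sqrt X.trace.re * Real.sqrt (X * E).trace.re := by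
  have hX0 : 0 ≤ X := nonneg_iff_posSemidef.mpr hX
  set R := CFC.sqrt X
  have hR : Rᴴ = R := IsSelfAdjoint.star_eq (CFC.sqrt_nonneg X).isSelfAdjoint
  have hRR : R * R = X := CFC.sqrt_mul_sqrt_self X
  have hXE : (X * E).trace = (R * E * R).trace := by
    rw [← hRR, mul_assoc, trace_mul_comm R]
  have hXE_nonneg : 0 ≤ (X * E).trace := by
    simpa only [hXE, hR] using (hE.mul_mul_conjTranspose_same R).trace_nonneg
  have hRE : re (R * E * (R * E)ᴴ).trace ≤ re (X * E).trace := by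
    have h := re_trace_mono <| (CFC.sqrt_nonneg X).isSelfAdjoint.conjugate_le_conjugate
      (mul_self_le_self (nonneg_iff_posSemidef.mpr hE) (le_iff.mpr hE1))
    rw [hXE, conjTranspose_mul, hR, hE.isHermitian.eq]
    simpa only [mul_assoc] using h
  refine ⟨(Complex.nonneg_iff.mp hXE_nonneg).2.symm, (Complex.nonneg_iff.mp hXE_nonneg).1, ?_, ?_⟩
  · exact traceNorm_eq_re_trace_abs (X * E) ▸ re_trace_le_re_trace_abs (X * E)
  · calc traceNorm (X * E) = re (CFC.abs (R * (R * E))).trace := by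
          rw [traceNorm_eq_re_trace_abs, ← mul_assoc, hRR]; rfl
      _ ≤ √(re (Rᴴ * R).trace) * √(re (R * E * (R * E)ᴴ).trace) := re_trace_abs_mul_le _ _
      _ ≤ √X.trace.re * √(X * E).trace.re := by
        rw [hR, hRR]
        exact mul_le_mul_of_nonneg_left (Real.sqrt_le_sqrt hRE) (Real.sqrt_nonneg _)
end

section
/- Let d ≥ 1, ω = exp(2πi/d), and let X and Z be the d×d shift and clock matrices: X e_j = e_{j+1 mod d} and Z e_j = ω^j e_j for the standard basis (e_j). For 0 ≤ u, v < d set W_{uv} = X^u Z^v. Then for every complex matrix M indexed by (Fin d × Fin m) (an operator on ℂ^d ⊗ ℂ^m), ∑_{u=0}^{d−1} ∑_{v=0}^{d−1} (W_{uv} ⊗ I_m) M (W_{uv} ⊗ I_m)† = d · (I_d ⊗ Tr_A M), where Tr_A M is the partial trace of M over the first factor. -/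
open scoped Kronecker Matrix

/-- Partial trace over the first tensor factor. -/
noncomputable def trA {d m : ℕ}
    (M : Matrix (Fin d × Fin m) (Fin d × Fin m) ℂ) : Matrix (Fin m) (Fin m) ℂ :=
  Matrix.of fun j j' => ∑ i, M (i, j) (i, j')

/-- The discrete shift matrix `X e_j = e_{j+1 mod d}`. -/
def weylX (d : ℕ) [NeZero d] : Matrix (Fin d) (Fin d) ℂ :=
  Matrix.of fun i j => if i = j + 1 then 1 else 0

/-- The discrete clock matrix `Z e_j = ω^j e_j`, `ω = exp(2πi/d)`. -/
noncomputable def weylZ (d : ℕ) : Matrix (Fin d) (Fin d) ℂ :=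
  Matrix.diagonal fun j : Fin d =>
    Complex.exp (2 * Real.pi * Complex.I / d) ^ (j : ℕ)

/-!
Each `X^u Z^v ⊗ 1` is a monomial matrix (a permutation matrix times a diagonal one), so
conjugating `M` by it only relabels the entries and multiplies them by phases: the entry at
`((a, b), (a', b'))` becomes `(ω^(a-u) · conj ω^(a'-u))^v · M ((a-u, b), (a'-u, b'))`.
Summing over `v` is a character sum over `ℤ/d`: it vanishes for `a ≠ a'` and equals `d` for
`a = a'`. Summing over `u` then runs `a - u` through all of `Fin d`, giving the partial trace.
-/

open Fin.NatCast

section MonomialMatrix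

variable {n m R : Type*} [DecidableEq n]

def monomialMatrix [Zero R] (σ : n → n) (f : n → R) : Matrix n n R :=
  Matrix.of fun i j => if j = σ i then f j else 0

theorem monomialMatrix_kronecker_one [MulZeroOneClass R] [DecidableEq m]
    (σ : n → n) (f : n → R) :
    monomialMatrix σ f ⊗ₖ (1 : Matrix m m R) =
      monomialMatrix (Prod.map σ id) (fun p => f p.1) := by
  ext ⟨i, b⟩ ⟨j, c⟩
  simp only [monomialMatrix, Matrix.kroneckerMap_apply, Matrix.of_apply, Matrix.one_apply,
    Prod.map_apply, id, Prod.mk.injEq]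
  split_ifs <;> simp_all [eq_comm]

variable [Fintype n]

theorem monomialMatrix_mul_apply [NonUnitalNonAssocSemiring R] (σ : n → n) (f : n → R)
    (M : Matrix n m R) (i : n) (k : m) :
    (monomialMatrix σ f * M) i k = f (σ i) * M (σ i) k := by
  simp [Matrix.mul_apply, monomialMatrix, ite_mul]

theorem mul_conjTranspose_monomialMatrix_apply [NonUnitalNonAssocSemiring R] [StarRing R]
    (σ : n → n) (f : n → R) (M : Matrix m n R) (i : m) (k : n) :
    (M * (monomialMatrix σ f)ᴴ) i k = M i (σ k) * star (f (σ k)) := by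
  simp [Matrix.mul_apply, monomialMatrix, apply_ite star, mul_ite]

theorem monomialMatrix_conj_apply [NonUnitalNonAssocSemiring R] [StarRing R]
    (σ : n → n) (f : n → R) (M : Matrix n n R) (i k : n) :
    (monomialMatrix σ f * M * (monomialMatrix σ f)ᴴ) i k =
      f (σ i) * M (σ i) (σ k) * star (f (σ k)) := by
  rw [mul_conjTranspose_monomialMatrix_apply, monomialMatrix_mul_apply]

theorem monomialMatrix_one_mul_monomialMatrix_one [NonAssocSemiring R] (σ τ : n → n) :
    monomialMatrix σ (1 : n → R) * monomialMatrix τ 1 = monomialMatrix (τ ∘ σ) 1 := by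
  ext i k
  rw [monomialMatrix_mul_apply]
  simp [monomialMatrix]

theorem monomialMatrix_mul_diagonal [NonUnitalNonAssocSemiring R] (σ : n → n) (f g : n → R) :
    monomialMatrix σ f * Matrix.diagonal g = monomialMatrix σ (f * g) := by
  ext i k
  simp [Matrix.mul_diagonal, monomialMatrix, ite_mul]

end MonomialMatrix

theorem weylX_eq_monomialMatrix (d : ℕ) [NeZero d] :
    weylX d = monomialMatrix (· - 1) 1 := by
  ext i j
  simp [weylX, monomialMatrix, eq_sub_iff_add_eq, eq_comm]

theorem weylX_pow_eq_monomialMatrix (d : ℕ) [NeZero d] (k : ℕ) :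
    weylX d ^ k = monomialMatrix (· - (k : Fin d)) 1 := by
  induction k with
  | zero => ext i j; simp [monomialMatrix, Matrix.one_apply, eq_comm]
  | succ k ih =>
    rw [pow_succ', ih, weylX_eq_monomialMatrix, monomialMatrix_one_mul_monomialMatrix_one]
    congr 1
    ext i
    simp [sub_sub, add_comm]

noncomputable def weylOmega (d : ℕ) : ℂ := Complex.exp (2 * Real.pi * Complex.I / d)

theorem isPrimitiveRoot_weylOmega (d : ℕ) [NeZero d] : IsPrimitiveRoot (weylOmega d) d :=
  Complex.isPrimitiveRoot_exp d (NeZero.ne d)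

theorem weylZ_pow (d k : ℕ) :
    weylZ d ^ k = Matrix.diagonal fun j : Fin d => (weylOmega d ^ (j : ℕ)) ^ k := by
  rw [weylZ, Matrix.diagonal_pow]
  rfl

theorem weylX_pow_mul_weylZ_pow (d : ℕ) [NeZero d] (u : Fin d) (v : ℕ) :
    weylX d ^ (u : ℕ) * weylZ d ^ v = monomialMatrix (· - u)
      fun j => (weylOmega d ^ (j : ℕ)) ^ v := by
  rw [weylX_pow_eq_monomialMatrix, Fin.cast_val_eq_self, weylZ_pow,
    monomialMatrix_mul_diagonal, one_mul]

theorem weylX_pow_mul_weylZ_pow_kronecker_one_conj_apply (d m : ℕ) [NeZero d]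
    (M : Matrix (Fin d × Fin m) (Fin d × Fin m) ℂ) (u : Fin d) (v : ℕ) (a a' : Fin d)
    (b b' : Fin m) :
    (((weylX d ^ (u : ℕ) * weylZ d ^ v) ⊗ₖ (1 : Matrix (Fin m) (Fin m) ℂ)) * M *
        ((weylX d ^ (u : ℕ) * weylZ d ^ v) ⊗ₖ (1 : Matrix (Fin m) (Fin m) ℂ))ᴴ) (a, b) (a', b') =
      (weylOmega d ^ ((a - u : Fin d) : ℕ) * star (weylOmega d ^ ((a' - u : Fin d) : ℕ))) ^ v *
        M (a - u, b) (a' - u, b') := by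
  rw [weylX_pow_mul_weylZ_pow, monomialMatrix_kronecker_one, monomialMatrix_conj_apply,
    star_pow, mul_pow, mul_right_comm]
  rfl

theorem geom_sum_eq_ite_of_pow_eq_one {K : Type*} [Field K] [DecidableEq K] {μ : K} {d : ℕ}
    (hμ : μ ^ d = 1) :
    ∑ i ∈ Finset.range d, μ ^ i = if μ = 1 then (d : K) else 0 := by
  split_ifs with h
  · simp [h]
  · rw [geom_sum_eq h, hμ, sub_self, zero_div]

theorem IsPrimitiveRoot.sum_pow_mul_star_pow_eq_ite {ζ : ℂ} {d : ℕ} (hζ : IsPrimitiveRoot ζ d)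
    (a a' : Fin d) :
    ∑ v : Fin d, (ζ ^ (a : ℕ) * star (ζ ^ (a' : ℕ))) ^ (v : ℕ) =
      if a = a' then (d : ℂ) else 0 := by
  have hd : d ≠ 0 := a.pos.ne'
  have hne : ζ ^ (a' : ℕ) ≠ 0 := pow_ne_zero _ (hζ.ne_zero hd)
  have hstar : star (ζ ^ (a' : ℕ)) = (ζ ^ (a' : ℕ))⁻¹ :=
    (Complex.inv_eq_conj (by rw [norm_pow, hζ.norm'_eq_one hd, one_pow])).symm
  have hroot : (ζ ^ (a : ℕ) * star (ζ ^ (a' : ℕ))) ^ d = 1 := by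
    rw [hstar, mul_pow, inv_pow, ← pow_mul, ← pow_mul, mul_comm (a : ℕ), mul_comm (a' : ℕ),
      pow_mul, pow_mul, hζ.pow_eq_one, one_pow, one_pow, inv_one, mul_one]
  have hone : ζ ^ (a : ℕ) * star (ζ ^ (a' : ℕ)) = 1 ↔ a = a' := by
    rw [hstar, mul_inv_eq_one₀ hne, Fin.ext_iff]
    exact ⟨fun h => hζ.pow_inj a.isLt a'.isLt h, fun h => h ▸ rfl⟩
  rw [Fin.sum_univ_eq_sum_range (fun v => (ζ ^ (a : ℕ) * star (ζ ^ (a' : ℕ))) ^ v),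
    geom_sum_eq_ite_of_pow_eq_one hroot]
  simp only [hone]

theorem sum_sub_apply_eq_trA {d m : ℕ} [NeZero d]
    (M : Matrix (Fin d × Fin m) (Fin d × Fin m) ℂ) (a : Fin d) (b b' : Fin m) :
    ∑ u : Fin d, M (a - u, b) (a - u, b') = trA M b b' :=
  Equiv.sum_comp (Equiv.subLeft a) fun i => M (i, b) (i, b')

/-- The Weyl twirl: averaging over all Weyl conjugations on the first factor
yields `d` times the identity tensored with the partial trace. -/
theorem weyl_twirl
    (d m : ℕ) [NeZero d]
    (M : Matrix (Fin d × Fin m) (Fin d × Fin m) ℂ) :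
    ∑ u : Fin d, ∑ v : Fin d,
      ((weylX d ^ (u : ℕ) * weylZ d ^ (v : ℕ)) ⊗ₖ
          (1 : Matrix (Fin m) (Fin m) ℂ)) * M *
        ((weylX d ^ (u : ℕ) * weylZ d ^ (v : ℕ)) ⊗ₖ
          (1 : Matrix (Fin m) (Fin m) ℂ))ᴴ =
      (d : ℂ) • ((1 : Matrix (Fin d) (Fin d) ℂ) ⊗ₖ trA M) := by
  ext ⟨a, b⟩ ⟨a', b'⟩
  simp only [Matrix.sum_apply, weylX_pow_mul_weylZ_pow_kronecker_one_conj_apply, ← Finset.sum_mul,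
    (isPrimitiveRoot_weylOmega d).sum_pow_mul_star_pow_eq_ite, sub_left_inj]
  rw [← Finset.mul_sum]
  split_ifs with h
  · subst h
    simp [sum_sub_apply_eq_trA]
  · simp [h]
end
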